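/- Let (X_t) be a Markov chain on a finite state space, let T be the hitting time of some fixed state, and set h(A) := E_A[T] for each state A. If there is a constant κ such that for every allowed transition A → B (i.e., with positive transition probability) one has 0 ≤ h(A) − h(B) ≤ κ, then Var_A(T) ≤ κ · E_A[T] for every initial state A. -/

import Mathlib

open scoped ENNReal BigOperators
open Filter Asymptotics

namespace ARW

variable {V : Type} [Fintype V] [DecidableEq V]

/-- A sub-stochastic matrix: every row sums to at most `1`. -/
def SubStochastic (K : V → V → ℝ≥0∞) : Prop := ∀ x, ∑ y, K x y ≤ 1

/-- Non-degenerate: no principal sub-matrix of `K` is stochastic. -/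
def NonDegenerate (K : V → V → ℝ≥0∞) : Prop :=
  ∀ S : Finset V, S.Nonempty → ∃ x ∈ S, ∑ y ∈ S, K x y ≠ 1

/-- A probability vector on `V`. -/
def IsProbVec (ν : V → ℝ≥0∞) : Prop := ∑ x, ν x = 1

/-- Probability that the `K`-walk currently at `x` next follows the trajectory `xs`
and is then killed. -/
noncomputable def pathProb (K : V → V → ℝ≥0∞) : V → List V → ℝ≥0∞
  | x, [] => 1 - ∑ y, K x y
  | x, y :: ys => K x y * pathProb K y ys

/-- Probability that a `(K,ν)`-walk has the (finite) full trajectory `w`. -/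
noncomputable def walkProb (K : V → V → ℝ≥0∞) (ν : V → ℝ≥0∞) : List V → ℝ≥0∞
  | [] => 0
  | x :: xs => ν x * pathProb K x xs

/-- `p(x)`: the probability that a `(K,ν)`-walk visits `x` before dying. -/
noncomputable def hitProb (K : V → V → ℝ≥0∞) (ν : V → ℝ≥0∞) (x : V) : ℝ≥0∞ :=
  ∑' w : List V, if x ∈ w then walkProb K ν w else 0

/-- The insertion law `ν` is admissible when every site has a chance of being
visited by a `(K,ν)`-walk. -/
def Admissible (K : V → V → ℝ≥0∞) (ν : V → ℝ≥0∞) : Prop := ∀ x, 0 < hitProb K ν x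

/-- The uniform law on `V`. -/
noncomputable def unifLaw (V : Type) [Fintype V] : V → ℝ≥0∞ :=
  fun _ => (Fintype.card V : ℝ≥0∞)⁻¹

/-! ### IDLA -/

/-- The IDLA update: the walker settles at the first site of its trajectory
which is not already occupied. -/
def idlaUpdate (S : Finset V) : List V → Finset V
  | [] => S
  | x :: xs => if x ∈ S then idlaUpdate S xs else insert x S

/-- The IDLA aggregate obtained from the initial set `A` after using the walks `ws`. -/
def idlaSet (A : Finset V) (ws : List (List V)) : Finset V := ws.foldl idlaUpdate A

/-- `P(T^A > t)`: probability that the IDLA process started from `A` and driven by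
i.i.d. `(K,ν)`-walks has not filled `V` after `t` steps. -/
noncomputable def idlaTail (K : V → V → ℝ≥0∞) (ν : V → ℝ≥0∞) (A : Finset V) (t : ℕ) : ℝ≥0∞ :=
  ∑' ws : Fin t → List V,
    (∏ i, walkProb K ν (ws i)) * (if idlaSet A (List.ofFn ws) = Finset.univ then 0 else 1)

/-- `E[T^A]`: the expected filling time of IDLA started from `A`. -/
noncomputable def idlaMean (K : V → V → ℝ≥0∞) (ν : V → ℝ≥0∞) (A : Finset V) : ℝ≥0∞ :=
  ∑' t : ℕ, idlaTail K ν A t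

/-- `Var(T^A)`: the variance of the filling time of IDLA started from `A`. -/
noncomputable def idlaVar (K : V → V → ℝ≥0∞) (ν : V → ℝ≥0∞) (A : Finset V) : ℝ≥0∞ :=
  (∑' t : ℕ, (2 * t + 1) * idlaTail K ν A t) - (idlaMean K ν A) ^ 2

/-! ### The ARW chain -/

/-- The state of a single site: empty, one sleeping particle, or `n+1` active particles. -/
inductive Site : Type
  | empty : Site
  | sleeping : Site
  | active (n : ℕ) : Site
deriving DecidableEq

/-- A configuration of particles. -/
abbrev Conf (V : Type) := V → Site

def Site.isActive : Site → Bool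
  | .active _ => true
  | _ => false

/-- The set of sites holding at least one active particle. -/
def activeSites (η : Conf V) : Finset V := Finset.univ.filter fun x => (η x).isActive

/-- Adding one active particle to a site (waking a sleeping particle if present). -/
def Site.addActive : Site → Site
  | .empty => .active 0
  | .sleeping => .active 1
  | .active n => .active (n + 1)

/-- Removing one active particle from a site. -/
def Site.removeOne : Site → Site
  | .active (n + 1) => .active n
  | _ => .empty

/-- Adding one active particle at site `y`. -/
def addActiveAt (η : Conf V) (y : V) : Conf V := Function.update η y (η y).addActive

/-- One sequential toppling step of ARW stabilization with sleep rate `lam`: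
an active site `x` is selected (if any); if its particle is alone it falls asleep
with probability `lam/(1+lam)`, moves to `y` with probability `K x y/(1+lam)` and
dies with the remaining probability; if it is not alone it moves to `y` with
probability `K x y` and dies with the remaining probability.  Stable
configurations are absorbing. -/
noncomputable def toppleKernel (K : V → V → ℝ≥0∞) (lam : ℝ) (η ξ : Conf V) : ℝ≥0∞ :=
  if h : (activeSites η).Nonempty then
    let x := h.choose
    let ημ : Conf V := Function.update η x (η x).removeOne
    let move : ℝ≥0∞ := ∑ y, if ξ = addActiveAt ημ y then K x y else 0
    let die : ℝ≥0∞ := if ξ = ημ then 1 - ∑ y, K x y else 0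
    if η x = Site.active 0 then
      ((if ξ = Function.update η x Site.sleeping then ENNReal.ofReal lam else 0) + move + die)
        / (ENNReal.ofReal lam + 1)
    else move + die
  else if ξ = η then 1 else 0

/-- Iterates of a sub-probability kernel on configurations. -/
noncomputable def kernelPow (M : Conf V → Conf V → ℝ≥0∞) : ℕ → Conf V → Conf V → ℝ≥0∞
  | 0 => fun η ξ => if ξ = η then 1 else 0
  | t + 1 => fun η ξ => ∑' σ : Conf V, M η σ * kernelPow M t σ ξ

/-- A stable configuration, seen as a configuration (`true` = sleeping particle). -/
def embed (b : V → Bool) : Conf V := fun x => if b x then Site.sleeping else Site.empty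

/-- One step of the `ARW(K,lam,ν)` chain: insert an active particle at a `ν`-distributed
site and stabilize; `arwStep K lam ν η ξ` is the probability of reaching the stable
configuration `ξ` from the stable configuration `η`. -/
noncomputable def arwStep (K : V → V → ℝ≥0∞) (lam : ℝ) (ν : V → ℝ≥0∞)
    (η ξ : V → Bool) : ℝ≥0∞ :=
  ∑ x, ν x * ⨆ t, kernelPow (toppleKernel K lam) t (addActiveAt (embed η) x) (embed ξ)

/-- The transition matrix of the `ARW(K,lam,ν)` chain on stable configurations. -/
noncomputable def arwMatrix (K : V → V → ℝ≥0∞) (lam : ℝ) (ν : V → ℝ≥0∞) :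
    Matrix (V → Bool) (V → Bool) ℝ :=
  Matrix.of fun η ξ => (arwStep K lam ν η ξ).toReal

/-! ### Distances to equilibrium, mixing and relaxation times -/

variable {S : Type} [Fintype S] [DecidableEq S]

/-- `π` is a stationary probability distribution for `P`. -/
def IsStationary (P : Matrix S S ℝ) (π : S → ℝ) : Prop :=
  (∀ s, 0 ≤ π s) ∧ (∑ s, π s = 1) ∧ ∀ s, ∑ r, π r * P r s = π s

/-- The separation distance to equilibrium at time `t`. -/
noncomputable def sepDist (P : Matrix S S ℝ) (π : S → ℝ) (t : ℕ) : ℝ :=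
  ⨆ η, ⨆ ξ, (1 - (P ^ t) η ξ / π ξ)

/-- The separation mixing time with precision `ε`. -/
noncomputable def sepMix (P : Matrix S S ℝ) (π : S → ℝ) (ε : ℝ) : ℕ :=
  sInf {t : ℕ | sepDist P π t ≤ ε}

/-- The total-variation distance to equilibrium at time `t`. -/
noncomputable def tvDist (P : Matrix S S ℝ) (π : S → ℝ) (t : ℕ) : ℝ :=
  ⨆ η, ⨆ A : Finset S, |∑ ξ ∈ A, ((P ^ t) η ξ - π ξ)|

/-- The total-variation mixing time with precision `ε`. -/
noncomputable def tvMix (P : Matrix S S ℝ) (π : S → ℝ) (ε : ℝ) : ℕ :=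
  sInf {t : ℕ | tvDist P π t ≤ ε}

/-- The relaxation time `1/(1-ρ)`, where `ρ` is the largest modulus of the
(complex) eigenvalues of `P` other than `1`. -/
noncomputable def relTime (P : Matrix S S ℝ) : ℝ :=
  (1 - sSup {r : ℝ | ∃ z : ℂ,
      z ≠ 1 ∧ (P.map (fun a : ℝ => (a : ℂ))).charpoly.IsRoot z ∧ r = ‖z‖})⁻¹

/-- Separation (or total-variation) cutoff for a sequence of chains with distance
functions `d n` and mixing times `ts n`. -/
def HasCutoff (d : ℕ → ℕ → ℝ) (ts : ℕ → ℕ) : Prop :=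
  ∀ α : ℝ, 0 ≤ α →
    (α < 1 → Tendsto (fun n => d n ⌊α * (ts n : ℝ)⌋₊) atTop (nhds 1)) ∧
    (1 < α → Tendsto (fun n => d n ⌊α * (ts n : ℝ)⌋₊) atTop (nhds 0))

end ARW
namespace ARW

/-- `P_A(T > t)` where `T` is the hitting time of the target state `z` by the
Markov chain with transition kernel `M` started at `A`. -/
noncomputable def hitTail {S : Type} [Fintype S] [DecidableEq S]
    (M : S → S → ℝ≥0∞) (z : S) : S → ℕ → ℝ≥0∞
  | A, 0 => if A = z then 0 else 1
  | A, t + 1 => if A = z then 0 else ∑ B, M A B * hitTail M z B t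

/-- `E_A[T]`, the expected hitting time of `z` started from `A`. -/
noncomputable def hitMean {S : Type} [Fintype S] [DecidableEq S]
    (M : S → S → ℝ≥0∞) (z : S) (A : S) : ℝ≥0∞ :=
  ∑' t : ℕ, hitTail M z A t

/-- `Var_A(T)`, the variance of the hitting time of `z` started from `A`. -/
noncomputable def hitVar {S : Type} [Fintype S] [DecidableEq S]
    (M : S → S → ℝ≥0∞) (z : S) (A : S) : ℝ≥0∞ :=
  (∑' t : ℕ, (2 * t + 1) * hitTail M z A t) - (hitMean M z A) ^ 2

/-- The law of a sum of `m` independent Bernoulli random variables with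
parameters `p i`, as a measure on `ℝ`. -/
noncomputable def bernoulliSumLaw {m : ℕ} (p : Fin m → ℝ≥0∞) : MeasureTheory.Measure ℝ :=
  ∑ b : Fin m → Bool,
    (∏ i, if b i then p i else 1 - p i) •
      MeasureTheory.Measure.dirac (∑ i, if b i then (1 : ℝ) else 0)

end ARW

/-!
Write `h(A) = E_A[T]` and `g(A) = κ h(A) + h(A)²`. Conditioning on the first step gives
`h(A) = 1 + ∑_B M(A,B) h(B)` and `E_A[T²] = 1 + ∑_B M(A,B) (E_B[T²] + 2 h(B))` for `A ≠ z`.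
On an allowed transition `0 ≤ h(A) - h(B) ≤ κ`, hence `(h(A) - h(B))² ≤ κ (h(A) - h(B))`;
averaging this over `M(A, ·)` shows that `g` is a supersolution of the second equation,
`1 + ∑_B M(A,B) (g(B) + 2 h(B)) ≤ g(A)`. Induction on the truncations of
`E_A[T²] = ∑_t (2t+1) P_A(T > t)` then gives `E_A[T²] ≤ g(A)`, which is the claim.
-/

theorem ENNReal.sq_add_sq_add_mul_le {x c κ : ℝ≥0∞} (hxc : x ≤ c) (hgap : c - x ≤ κ) :
    x ^ 2 + c ^ 2 + κ * x ≤ 2 * c * x + κ * c := by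
  have hc : c = x + (c - x) := (add_tsub_cancel_of_le hxc).symm
  generalize c - x = d at hc hgap
  subst hc
  calc x ^ 2 + (x + d) ^ 2 + κ * x = (2 * x ^ 2 + 2 * x * d + κ * x) + d * d := by ring
    _ ≤ (2 * x ^ 2 + 2 * x * d + κ * x) + κ * d := by gcongr
    _ = 2 * (x + d) * x + κ * (x + d) := by ring

theorem ENNReal.one_add_sum_le_mul_add_sq {ι : Type*} (s : Finset ι) (w x : ι → ℝ≥0∞)
    {c κ : ℝ≥0∞} (hw : ∑ i ∈ s, w i = 1) (hgap : ∀ i ∈ s, w i ≠ 0 → x i ≤ c ∧ c - x i ≤ κ)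
    (hc : c = 1 + ∑ i ∈ s, w i * x i) :
    1 + ∑ i ∈ s, w i * (κ * x i + x i ^ 2 + 2 * x i) ≤ κ * c + c ^ 2 := by
  set m := ∑ i ∈ s, w i * x i
  have hc1 : c ≠ 0 := by simp [hc]
  rcases eq_or_ne c ⊤ with hctop | hctop
  · simp [hctop, ENNReal.mul_top, pow_two]
  rcases eq_or_ne κ ⊤ with hκtop | hκtop
  · simp [hκtop, ENNReal.top_mul hc1]
  have hmtop : m ≠ ⊤ := fun h => hctop (by rw [hc, h, add_top])
  -- Summing `(c - x)² ≤ κ (c - x)` against `w`.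
  have hweighted : ∑ i ∈ s, w i * x i ^ 2 + c ^ 2 + κ * m ≤ 2 * c * m + κ * c := by
    calc ∑ i ∈ s, w i * x i ^ 2 + c ^ 2 + κ * m
          = ∑ i ∈ s, w i * (x i ^ 2 + c ^ 2 + κ * x i) := by
          simp only [mul_add, Finset.sum_add_distrib, ← Finset.sum_mul, hw, one_mul, m,
            Finset.mul_sum, mul_left_comm κ]
      _ ≤ ∑ i ∈ s, w i * (2 * c * x i + κ * c) := by
          refine Finset.sum_le_sum fun i his => ?_
          rcases eq_or_ne (w i) 0 with hi | hi
          · simp [hi]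
          · obtain ⟨hxc, hgapi⟩ := hgap i his hi
            exact mul_le_mul_right (ENNReal.sq_add_sq_add_mul_le hxc hgapi) _
      _ = 2 * c * m + κ * c := by
          simp only [mul_add, Finset.sum_add_distrib, ← Finset.sum_mul, hw, one_mul, m,
            Finset.mul_sum, mul_left_comm (2 * c)]
  have hexpand : ∑ i ∈ s, w i * (κ * x i + x i ^ 2 + 2 * x i)
      = κ * m + ∑ i ∈ s, w i * x i ^ 2 + 2 * m := by
    simp only [mul_add, Finset.sum_add_distrib, m, Finset.mul_sum, mul_left_comm κ,
      mul_left_comm (2 : ℝ≥0∞)]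
  have hfin : c ^ 2 + κ * m ≠ ⊤ := by finiteness
  rw [← ENNReal.add_le_add_iff_right hfin, hexpand]
  calc 1 + (κ * m + ∑ i ∈ s, w i * x i ^ 2 + 2 * m) + (c ^ 2 + κ * m)
      = 1 + κ * m + 2 * m + (∑ i ∈ s, w i * x i ^ 2 + c ^ 2 + κ * m) := by ring
    _ ≤ 1 + κ * m + 2 * m + (2 * c * m + κ * c) := by gcongr
    _ ≤ 1 + κ * m + 2 * m + (2 * c * m + κ * c) + 1 := le_self_add
    _ = κ * c + c ^ 2 + (c ^ 2 + κ * m) := by rw [hc]; ring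

namespace ARW

noncomputable def hitSecondMomentUpTo {S : Type} [Fintype S] [DecidableEq S]
    (M : S → S → ℝ≥0∞) (z : S) (A : S) (n : ℕ) : ℝ≥0∞ :=
  ∑ t ∈ Finset.range n, (2 * (t : ℝ≥0∞) + 1) * hitTail M z A t

section HittingTime

variable {S : Type} [Fintype S] [DecidableEq S]

theorem hitTail_self (M : S → S → ℝ≥0∞) (z : S) (t : ℕ) : hitTail M z z t = 0 := by
  cases t <;> simp [hitTail]

theorem hitTail_zero_of_ne (M : S → S → ℝ≥0∞) {z A : S} (h : A ≠ z) :
    hitTail M z A 0 = 1 := by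
  simp [hitTail, h]

theorem hitTail_succ_of_ne (M : S → S → ℝ≥0∞) {z A : S} (h : A ≠ z) (t : ℕ) :
    hitTail M z A (t + 1) = ∑ B, M A B * hitTail M z B t := by
  simp [hitTail, h]

theorem hitMean_eq_one_add_sum (M : S → S → ℝ≥0∞) {z A : S} (h : A ≠ z) :
    hitMean M z A = 1 + ∑ B, M A B * hitMean M z B := by
  rw [hitMean, tsum_eq_zero_add' ENNReal.summable, hitTail_zero_of_ne M h]
  simp only [hitTail_succ_of_ne M h, hitMean, ← ENNReal.tsum_mul_left,
    Summable.tsum_finsetSum fun _ _ => ENNReal.summable]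

theorem hitSecondMomentUpTo_self (M : S → S → ℝ≥0∞) (z : S) (n : ℕ) :
    hitSecondMomentUpTo M z z n = 0 := by
  simp [hitSecondMomentUpTo, hitTail_self]

theorem hitSecondMomentUpTo_succ_of_ne (M : S → S → ℝ≥0∞) {z A : S} (h : A ≠ z) (n : ℕ) :
    hitSecondMomentUpTo M z A (n + 1) = 1 + ∑ B, M A B *
      (hitSecondMomentUpTo M z B n + 2 * ∑ t ∈ Finset.range n, hitTail M z B t) := by
  rw [hitSecondMomentUpTo, Finset.sum_range_succ', hitTail_zero_of_ne M h, add_comm]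
  simp only [CharP.cast_eq_zero, mul_zero, zero_add, mul_one, hitTail_succ_of_ne M h,
    Finset.mul_sum]
  rw [Finset.sum_comm]
  refine congrArg _ (Finset.sum_congr rfl fun B _ => ?_)
  simp only [hitSecondMomentUpTo, Finset.mul_sum, ← Finset.sum_add_distrib]
  refine Finset.sum_congr rfl fun t _ => ?_
  push_cast
  ring

theorem hitSecondMomentUpTo_le (M : S → S → ℝ≥0∞) (hM : ∀ A, ∑ B, M A B = 1) (z : S)
    {κ : ℝ≥0∞} (hκ : ∀ A B : S, 0 < M A B →
      hitMean M z B ≤ hitMean M z A ∧ hitMean M z A - hitMean M z B ≤ κ) (n : ℕ) (A : S) :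
    hitSecondMomentUpTo M z A n ≤ κ * hitMean M z A + hitMean M z A ^ 2 := by
  induction n generalizing A with
  | zero => simp [hitSecondMomentUpTo]
  | succ n ih =>
    rcases eq_or_ne A z with rfl | hA
    · simp [hitSecondMomentUpTo_self]
    calc hitSecondMomentUpTo M z A (n + 1)
        ≤ 1 + ∑ B, M A B * (κ * hitMean M z B + hitMean M z B ^ 2 + 2 * hitMean M z B) := by
          rw [hitSecondMomentUpTo_succ_of_ne M hA]
          gcongr with B
          exacts [ih B, ENNReal.sum_le_tsum _]
      _ ≤ κ * hitMean M z A + hitMean M z A ^ 2 :=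
          ENNReal.one_add_sum_le_mul_add_sq _ _ _ (hM A)
            (fun B _ hB => hκ A B (pos_iff_ne_zero.mpr hB)) (hitMean_eq_one_add_sum M hA)

end HittingTime

theorem aldous_variance_estimate_general
    {S : Type} [Fintype S] [DecidableEq S]
    (M : S → S → ℝ≥0∞) (hM : ∀ A, ∑ B, M A B = 1)
    (z : S)
    (κ : ℝ≥0∞)
    (hκ : ∀ A B : S, 0 < M A B →
      hitMean M z B ≤ hitMean M z A ∧ hitMean M z A - hitMean M z B ≤ κ) :
    ∀ A : S, hitVar M z A ≤ κ * hitMean M z A := by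
  intro A
  rw [hitVar, tsub_le_iff_right, ENNReal.tsum_eq_iSup_nat]
  exact iSup_le fun n => hitSecondMomentUpTo_le M hM z hκ n A

/-- **Lemma (Aldous' variance estimate for hitting times).**  Let `T` be the hitting
time of a fixed state `z` by a Markov chain on a finite state space with kernel `M`,
almost surely finite from every initial state, and let `h(A) := E_A[T]`.  If
`0 ≤ h(A) − h(B) ≤ κ` for every allowed transition `A → B`, then
`Var_A(T) ≤ κ E_A[T]` for every initial state `A`. -/
theorem aldous_variance_estimate
    {S : Type} [Fintype S] [DecidableEq S]
    (M : S → S → ℝ≥0∞) (hM : ∀ A, ∑ B, M A B = 1)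
    (z : S)
    (hfin : ∀ A : S, Filter.Tendsto (fun t => hitTail M z A t) Filter.atTop (nhds 0))
    (κ : ℝ≥0∞)
    (hκ : ∀ A B : S, 0 < M A B →
      hitMean M z B ≤ hitMean M z A ∧ hitMean M z A - hitMean M z B ≤ κ) :
    ∀ A : S, hitVar M z A ≤ κ * hitMean M z A :=
  aldous_variance_estimate_general M hM z κ hκ

end ARW
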